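/- arXiv:2112.04819 — 7 statements merged into one kernel-verified Lean document; each statement's English description precedes it below -/
import Mathlib

section
/- For positive reals λ, μ, c with ρ := λ/μ < 1/2, the function s ↦ (1 + ρμ s/(2c)) / (1 + ρμ s / (c(1 − (ρ/(1−ρ)))) ), evaluated at s replaced by (1/2 − ρ)s, converges as ρ ↑ 1/2 to 1/(1 + (μ/(8c)) s) for every s ≥ 0. -/
open Filter Topology

/-!
The factor `1 - ρ/(1 - ρ) = (1 - 2ρ)/(1 - ρ)` vanishes at `ρ = 1/2` to exactly the order of the
scaling `1/2 - ρ`, so after the substitution `s ↦ (1/2 - ρ)s` the function agrees, for `ρ < 1/2`,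
with a rational function of `ρ` that is continuous at `1/2`; its value there is the limit.
-/

lemma one_sub_div_one_sub {ρ : ℝ} (hρ : ρ ≠ 1) : 1 - ρ / (1 - ρ) = (1 - 2 * ρ) / (1 - ρ) := by
  have : 1 - ρ ≠ 0 := sub_ne_zero.mpr hρ.symm
  field_simp
  ring

lemma mul_half_sub_div_one_sub_div_one_sub {ρ : ℝ} (hρ₁ : ρ ≠ 1) (hρ₂ : ρ ≠ 1 / 2) (μ c x : ℝ) :
    ρ * μ * ((1 / 2 - ρ) * x) / (c * (1 - ρ / (1 - ρ))) = ρ * μ * x * (1 - ρ) / (2 * c) := by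
  have h₁ : 1 - ρ ≠ 0 := sub_ne_zero.mpr hρ₁.symm
  have h₂ : 1 - ρ * 2 ≠ 0 := by contrapose! hρ₂; linarith
  rw [one_sub_div_one_sub hρ₁]
  rcases eq_or_ne c 0 with rfl | hc
  · simp
  field_simp

/-- heavy-traffic limit of the marginal workload LST in the
symmetric case: with `F ρ s = (1 + ρμs/(2c)) / (1 + ρμs/(c(1 − ρ/(1−ρ))))`,
for every `s ≥ 0`,  `F ρ ((1/2 − ρ)s) → 1/(1 + (μ/(8c))s)` as `ρ ↑ 1/2`. -/
theorem stmt_3 (μ c : ℝ) (hμ : 0 < μ) (hc : 0 < c) (s : ℝ) (hs : 0 ≤ s) :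
    Tendsto
      (fun ρ : ℝ =>
        (1 + ρ * μ * ((1/2 - ρ) * s) / (2 * c)) /
        (1 + ρ * μ * ((1/2 - ρ) * s) / (c * (1 - ρ / (1 - ρ)))))
      (nhdsWithin (1/2) (Set.Iio (1/2)))
      (nhds (1 / (1 + (μ / (8 * c)) * s))) := by
  set g : ℝ → ℝ := fun ρ =>
    (1 + ρ * μ * ((1/2 - ρ) * s) / (2 * c)) / (1 + ρ * μ * s * (1 - ρ) / (2 * c))
  have hden : 1 + 1 / 2 * μ * s * (1 - 1 / 2) / (2 * c) = 1 + μ / (8 * c) * s := by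
    field_simp; ring
  have hg : ContinuousAt g (1 / 2) := by
    refine ContinuousAt.div (by fun_prop) (by fun_prop) ?_
    rw [hden]
    positivity
  have hg_half : g (1 / 2) = 1 / (1 + μ / (8 * c) * s) := by
    simp only [g, hden]
    norm_num
  rw [← hg_half]
  refine (tendsto_nhdsWithin_of_tendsto_nhds hg.tendsto).congr' ?_
  filter_upwards [self_mem_nhdsWithin] with ρ (hρ : ρ < 1 / 2)
  rw [mul_half_sub_div_one_sub_div_one_sub (by linarith) hρ.ne]
end

section
/- Let c₁, c₂, μ₁ > 0 and for ρ₁ < c₂/(c₁+c₂) define F(ρ₁, s) = (1 + ρ₁μ₁ s/(c₁+c₂)) / (1 + ρ₁μ₁ s/(c₂(1 − (c₁/c₂)(ρ₁/(1−ρ₁))))). Then for every s ≥ 0, lim_{ρ₁ ↑ c₂/(c₁+c₂)} F(ρ₁, (c₂/(c₁+c₂) − ρ₁)s) = 1/(1 + c₁c₂μ₁ s/(c₁+c₂)³). -/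
open Filter Topology

/-- heavy-traffic limit of the marginal workload LST in the
asymmetric case: with
`F ρ₁ s = (1 + ρ₁μ₁s/(c₁+c₂)) / (1 + ρ₁μ₁s/(c₂(1 − (c₁/c₂)(ρ₁/(1−ρ₁)))))`,
for every `s ≥ 0`,
`F ρ₁ ((c₂/(c₁+c₂) − ρ₁)s) → 1/(1 + c₁c₂μ₁s/(c₁+c₂)³)` as `ρ₁ ↑ c₂/(c₁+c₂)`. -/
theorem stmt_4 (c₁ c₂ μ₁ : ℝ) (hc₁ : 0 < c₁) (hc₂ : 0 < c₂) (hμ₁ : 0 < μ₁)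
    (s : ℝ) (hs : 0 ≤ s) :
    Tendsto
      (fun ρ₁ : ℝ =>
        (1 + ρ₁ * μ₁ * ((c₂ / (c₁ + c₂) - ρ₁) * s) / (c₁ + c₂)) /
        (1 + ρ₁ * μ₁ * ((c₂ / (c₁ + c₂) - ρ₁) * s) /
          (c₂ * (1 - (c₁ / c₂) * (ρ₁ / (1 - ρ₁))))))
      (nhdsWithin (c₂ / (c₁ + c₂)) (Set.Iio (c₂ / (c₁ + c₂))))
      (nhds (1 / (1 + c₁ * c₂ * μ₁ * s / (c₁ + c₂) ^ 3))) := by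
  have hc : (0:ℝ) < c₁ + c₂ := by linarith
  set ρ : ℝ := c₂ / (c₁ + c₂) with hρ
  have hρ1 : ρ < 1 := by rw [hρ, div_lt_one hc]; linarith
  have hD : (0:ℝ) < 1 + c₁ * c₂ * μ₁ * s / (c₁ + c₂) ^ 3 := by positivity
  -- the simplified function
  have key : Tendsto (fun ρ₁ : ℝ => (1 + ρ₁ * μ₁ * ((ρ - ρ₁) * s) / (c₁ + c₂)) /
      (1 + ρ₁ * (1 - ρ₁) * μ₁ * s / (c₁ + c₂)))
      (nhdsWithin ρ (Set.Iio ρ)) (nhds (1 / (1 + c₁ * c₂ * μ₁ * s / (c₁ + c₂) ^ 3))) := by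
    have hnum : Tendsto (fun ρ₁ : ℝ => 1 + ρ₁ * μ₁ * ((ρ - ρ₁) * s) / (c₁ + c₂))
        (nhds ρ) (nhds 1) := by
      have hcont : Continuous (fun ρ₁ : ℝ => 1 + ρ₁ * μ₁ * ((ρ - ρ₁) * s) / (c₁ + c₂)) := by
        continuity
      have := hcont.tendsto ρ
      simpa using this
    have hden : Tendsto (fun ρ₁ : ℝ => 1 + ρ₁ * (1 - ρ₁) * μ₁ * s / (c₁ + c₂))
        (nhds ρ) (nhds (1 + c₁ * c₂ * μ₁ * s / (c₁ + c₂) ^ 3)) := by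
      have hcont : Continuous (fun ρ₁ : ℝ => 1 + ρ₁ * (1 - ρ₁) * μ₁ * s / (c₁ + c₂)) := by
        continuity
      have hval : 1 + ρ * (1 - ρ) * μ₁ * s / (c₁ + c₂)
          = 1 + c₁ * c₂ * μ₁ * s / (c₁ + c₂) ^ 3 := by
        rw [hρ]; field_simp; ring
      have := hcont.tendsto ρ
      rw [hval] at this
      exact this
    exact ((hnum.div hden hD.ne').mono_left nhdsWithin_le_nhds)
  refine key.congr' ?_
  filter_upwards [self_mem_nhdsWithin] with ρ₁ hρ₁
  have h1 : ρ₁ < 1 := lt_trans hρ₁ hρ1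
  have h1' : (1:ℝ) - ρ₁ ≠ 0 := by linarith
  have h2 : ρ - ρ₁ ≠ 0 := by
    have : ρ₁ < ρ := hρ₁
    linarith
  have hinner : ρ₁ * μ₁ * ((ρ - ρ₁) * s) / (c₂ * (1 - c₁ / c₂ * (ρ₁ / (1 - ρ₁))))
      = ρ₁ * (1 - ρ₁) * μ₁ * s / (c₁ + c₂) := by
    have hden : c₂ * (1 - c₁ / c₂ * (ρ₁ / (1 - ρ₁))) = (c₁ + c₂) * (ρ - ρ₁) / (1 - ρ₁) := by
      rw [hρ]; field_simp; ring
    rw [hden]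
    rw [div_div_eq_mul_div, div_eq_div_iff (mul_ne_zero hc.ne' h2) hc.ne' ]
    ring
  rw [hinner]
end

section
/- Let θ₁ > θ₂ > 0 and let V₁ be a random variable such that V₁ + E₁ is distributed as E₂, where E₁ ~ Exp(θ₁) is independent of V₁ and E₂ ~ Exp(θ₂). Then the law of V₁ is the mixture (θ₂/θ₁)·δ₀ + (1 − θ₂/θ₁)·Exp(θ₂). -/
open MeasureTheory ProbabilityTheory Complex

/-! The characteristic function of `Exp(θ)` is `θ / (θ - i t)`, so independence turns
`V₁ + E₁ ~ Exp(θ₂)` into `φ_{V₁}(t) = θ₂ (θ₁ - i t) / (θ₁ (θ₂ - i t))`. Writing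
`θ₂ (θ₁ - i t) = θ₂ (θ₂ - i t) + (θ₁ - θ₂) θ₂` exhibits this as the characteristic function of
`(θ₂/θ₁)·δ₀ + (1 − θ₂/θ₁)·Exp(θ₂)`, and characteristic functions determine finite measures. -/

section CharFun

variable {E : Type*} {mE : MeasurableSpace E} [SeminormedAddCommGroup E] [InnerProductSpace ℝ E]

lemma charFun_add_measure [OpensMeasurableSpace E] {μ ν : Measure E} [IsFiniteMeasure μ]
    [IsFiniteMeasure ν] (t : E) : charFun (μ + ν) t = charFun μ t + charFun ν t := by
  have hint (ρ : Measure E) [IsFiniteMeasure ρ] :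
      Integrable (fun x : E => cexp (inner ℝ x t * I)) ρ :=
    (integrable_const (1 : ℝ)).mono' (by fun_prop)
      (.of_forall fun x => by simp [norm_exp_ofReal_mul_I])
  exact integral_add_measure (hint μ) (hint ν)

lemma charFun_smul_measure (c : ENNReal) (μ : Measure E) (t : E) :
    charFun (c • μ) t = c.toReal * charFun μ t := by
  simp only [charFun_apply, integral_smul_measure, real_smul]

end CharFun

lemma ofReal_sub_mul_I_ne_zero {r : ℝ} (hr : r ≠ 0) (t : ℝ) : (r : ℂ) - t * I ≠ 0 :=
  fun h => by simpa [hr] using congrArg re h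

lemma charFun_expMeasure {r : ℝ} (hr : 0 < r) (t : ℝ) :
    charFun (expMeasure r) t = r / (r - t * I) := by
  have hpdf : gammaPDF 1 r
      = (Set.Ici 0).indicator fun x => ENNReal.ofReal (r * Real.exp (-(r * x))) := by
    ext x
    exact exponentialPDF_eq r x |>.trans (by split_ifs with h <;> simp [h])
  have hre : (-(r : ℂ) + t * I).re < 0 := by simpa using hr
  have := ofReal_sub_mul_I_ne_zero hr.ne' t
  rw [charFun_apply_real, expMeasure, gammaMeasure, hpdf, withDensity_indicator measurableSet_Ici,
    integral_withDensity_eq_integral_toReal_smul (by fun_prop)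
      (.of_forall fun _ => ENNReal.ofReal_lt_top), integral_Ici_eq_integral_Ioi]
  calc ∫ x in Set.Ioi (0 : ℝ), (ENNReal.ofReal (r * Real.exp (-(r * x)))).toReal • cexp (t * x * I)
      = ∫ x in Set.Ioi (0 : ℝ), r * cexp ((-r + t * I) * x) := by
        congr 1 with x
        rw [ENNReal.toReal_ofReal (by positivity), real_smul, ofReal_mul, ofReal_exp,
          mul_assoc, ← Complex.exp_add]
        push_cast
        ring_nf
    _ = r / (r - t * I) := by
        rw [integral_const_mul, integral_exp_mul_complex_Ioi hre, ofReal_zero, mul_zero,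
          Complex.exp_zero, show -(r : ℂ) + t * I = -(r - t * I) by ring]
        field_simp

theorem stmt_5_general {Ω : Type*} [MeasureSpace Ω] {P : Measure Ω} [IsProbabilityMeasure P]
    (θ₁ θ₂ : ℝ) (h₂ : 0 < θ₂) (h₁ : θ₂ < θ₁)
    (V₁ E₁ : Ω → ℝ) (hV₁ : Measurable V₁) (hE₁ : Measurable E₁)
    (hind : IndepFun V₁ E₁ P)
    (hE₁law : Measure.map E₁ P = expMeasure θ₁)
    (hsum : Measure.map (fun ω => V₁ ω + E₁ ω) P = expMeasure θ₂) :
    Measure.map V₁ P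
      = ENNReal.ofReal (θ₂ / θ₁) • Measure.dirac (0 : ℝ)
        + ENNReal.ofReal (1 - θ₂ / θ₁) • expMeasure θ₂ := by
  have hθ₁ : 0 < θ₁ := h₂.trans h₁
  have : IsProbabilityMeasure (expMeasure θ₂) := isProbabilityMeasure_expMeasure h₂
  have : IsProbabilityMeasure (P.map V₁) := Measure.isProbabilityMeasure_map hV₁.aemeasurable
  have := (Measure.dirac (0 : ℝ)).smul_finite (ENNReal.ofReal_ne_top (r := θ₂ / θ₁))
  have := (expMeasure θ₂).smul_finite (ENNReal.ofReal_ne_top (r := 1 - θ₂ / θ₁))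
  refine Measure.ext_of_charFun (funext fun t => ?_)
  have hθ₁t := ofReal_sub_mul_I_ne_zero hθ₁.ne' t
  have hθ₂t := ofReal_sub_mul_I_ne_zero h₂.ne' t
  have hθ₁ℂ : (θ₁ : ℂ) ≠ 0 := ofReal_ne_zero.2 hθ₁.ne'
  have hconv := congrFun (hind.charFun_map_fun_add_eq_mul hV₁.aemeasurable hE₁.aemeasurable) t
  rw [hsum, hE₁law, Pi.mul_apply, charFun_expMeasure h₂, charFun_expMeasure hθ₁] at hconv
  have hV : charFun (P.map V₁) t = θ₂ * (θ₁ - t * I) / (θ₁ * (θ₂ - t * I)) := by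
    rw [eq_div_iff (mul_ne_zero hθ₁ℂ hθ₂t)]
    field_simp at hconv
    linear_combination -hconv
  rw [hV, charFun_add_measure, charFun_smul_measure, charFun_smul_measure, charFun_dirac,
    charFun_expMeasure h₂, ENNReal.toReal_ofReal (by positivity),
    ENNReal.toReal_ofReal (sub_nonneg.2 ((div_le_one hθ₁).2 h₁.le))]
  simp only [inner_zero_left, ofReal_zero, zero_mul, Complex.exp_zero, mul_one]
  push_cast
  field_simp
  ring

/-- if `V₁ + E₁ ~ Exp(θ₂)` with `E₁ ~ Exp(θ₁)` independent of `V₁`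
and `θ₁ > θ₂ > 0`, then the law of `V₁` is the mixture
`(θ₂/θ₁)·δ₀ + (1 − θ₂/θ₁)·Exp(θ₂)`. -/
theorem stmt_5 {Ω : Type*} [MeasureSpace Ω] {P : Measure Ω} [IsProbabilityMeasure P]
    (θ₁ θ₂ : ℝ) (h₂ : 0 < θ₂) (h₁ : θ₂ < θ₁)
    (V₁ E₁ : Ω → ℝ) (hV₁ : Measurable V₁) (hE₁ : Measurable E₁)
    (hVnn : ∀ ω, 0 ≤ V₁ ω)
    (hind : IndepFun V₁ E₁ P)
    (hE₁law : Measure.map E₁ P = expMeasure θ₁)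
    (hsum : Measure.map (fun ω => V₁ ω + E₁ ω) P = expMeasure θ₂) :
    Measure.map V₁ P
      = ENNReal.ofReal (θ₂ / θ₁) • Measure.dirac (0 : ℝ)
        + ENNReal.ofReal (1 - θ₂ / θ₁) • expMeasure θ₂ :=
  stmt_5_general θ₁ θ₂ h₂ h₁ V₁ E₁ hV₁ hE₁ hind hE₁law hsum
end

section
/- The function ψ(z) = (1 − √2·cosh((π/4)√(μz/c − 1))) / (1 + √2·cosh((π/4)√(μz/c − 1))) is a conformal (holomorphic bijective) map from the interior of the parabola {u + iv : v² = (16c/μ)(u + 3c/μ)} onto the open unit disk, with ψ(0) = 0 and ψ(−3c/μ) = 1. -/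
/-!
`ψ` is the composite of `z ↦ (μ/c) z - 1`, the principal square root, `t ↦ (π/4) t`,
`ζ ↦ √2 cosh ζ` and the Cayley map `ζ ↦ (1 - ζ)/(1 + ζ)`. The affine map sends the parabola
onto `v² < 16 (u + 4)`, whose preimage under squaring is the strip `|Im s| < 2`; the principal
root picks the half `Re s ≥ 0` of it (with the upper half of the boundary ray `Re s = 0`).
Scaled to height `π/2`, this half-strip is mapped by `cosh` bijectively onto the right half-plane:
injectively because `cosh t = cos (t i)` is even and `2πi`-periodic, and onto because for
`Re ζ > 0` both roots `e, e⁻¹` of `e + e⁻¹ = 2ζ` have positive real part, so one of `± log e`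
lies in the half-strip. The Cayley map takes the right half-plane onto the disk.
Holomorphy survives the branch cut of the square root because `cosh (a s)` is even in `s`, so
`cosh (a √w)` can be computed with whichever branch of `√w` is holomorphic near `w ≠ 0`, and
`w = 0` is a removable singularity.
-/

open Complex Set Metric
open scoped Real

def sqrtRange : Set ℂ := {s | 0 < s.re ∨ s.re = 0 ∧ 0 ≤ s.im}

def halfStrip (b : ℝ) : Set ℂ := sqrtRange ∩ {t | |t.im| < b}

/-- Squaring maps the lines `Im s = ±b` onto the boundary parabola `v² = 4b²(u + b²)`. -/
def parabolaInterior (b : ℝ) : Set ℂ := {w | w.im ^ 2 < 4 * b ^ 2 * (w.re + b ^ 2)}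

noncomputable def cayley (ζ : ℂ) : ℂ := (1 - ζ) / (1 + ζ)

lemma mem_sqrtRange_iff_arg {s : ℂ} : s ∈ sqrtRange ↔ -(π / 2) < s.arg ∧ s.arg ≤ π / 2 := by
  rw [neg_pi_div_two_lt_arg_iff, arg_le_pi_div_two_iff, sqrtRange, mem_ofPred_eq]
  rcases lt_trichotomy s.re 0 with h | h | h
  · simp [h.ne, h.not_gt, h.not_ge]
  · simp [h]
  · simp [h, h.le]

lemma mem_sqrtRange_or_neg_mem (s : ℂ) : s ∈ sqrtRange ∨ -s ∈ sqrtRange := by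
  simp only [sqrtRange, mem_ofPred_eq, neg_re, neg_im, neg_pos, neg_eq_zero, neg_nonneg]
  rcases lt_trichotomy s.re 0 with h | h | h
  · exact .inr (.inl h)
  · rcases le_total 0 s.im with h' | h'
    · exact .inl (.inr ⟨h, h'⟩)
    · exact .inr (.inr ⟨h, h'⟩)
  · exact .inl (.inl h)

lemma cpow_half_mem_sqrtRange (w : ℂ) : w ^ (1 / 2 : ℂ) ∈ sqrtRange := by
  rcases eq_or_ne w 0 with rfl | hw
  · simp [sqrtRange]
  have him : (log w * (1 / 2)).im = w.arg / 2 := by simp [log_im, div_eq_mul_inv]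
  have hlt := neg_pi_lt_arg w
  have hle := arg_le_pi w
  rw [mem_sqrtRange_iff_arg, cpow_def_of_ne_zero hw, arg_exp, (toIocMod_eq_self _).2, him]
  · constructor <;> linarith
  · rw [him]; constructor <;> linarith

lemma sq_cpow_half (w : ℂ) : (w ^ (1 / 2 : ℂ)) ^ 2 = w := by
  simp [one_div]

lemma sq_cpow_half_of_mem_sqrtRange {s : ℂ} (hs : s ∈ sqrtRange) : (s ^ 2) ^ (1 / 2 : ℂ) = s := by
  rw [mem_sqrtRange_iff_arg] at hs
  rw [one_div]
  exact pow_cpow_ofNat_inv hs.1 hs.2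

lemma neg_sq_cpow_half {r : ℝ} (hr : 0 ≤ r) : (-(r : ℂ) ^ 2) ^ (1 / 2 : ℂ) = r * I := by
  rw [← sq_cpow_half_of_mem_sqrtRange (s := r * I) (.inr ⟨by simp, by simp [hr]⟩)]
  congr 1
  rw [mul_pow, I_sq, mul_neg_one]

lemma cosh_mul_neg_sq_cpow_half (a : ℂ) {r : ℝ} (hr : 0 ≤ r) :
    cosh (a * (-(r : ℂ) ^ 2) ^ (1 / 2 : ℂ)) = cos (a * r) := by
  rw [neg_sq_cpow_half hr, ← mul_assoc, cosh_mul_I]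

lemma sq_mem_parabolaInterior_iff {b : ℝ} (hb : 0 < b) (s : ℂ) :
    s ^ 2 ∈ parabolaInterior b ↔ |s.im| < b := by
  have key : 4 * b ^ 2 * ((s ^ 2).re + b ^ 2) - (s ^ 2).im ^ 2
      = 4 * (b ^ 2 - s.im ^ 2) * (s.re ^ 2 + b ^ 2) := by
    simp only [sq, mul_re, mul_im]; ring
  have hpos : 0 < s.re ^ 2 + b ^ 2 := by positivity
  rw [← sq_lt_sq₀ (abs_nonneg _) hb.le, sq_abs, parabolaInterior, mem_ofPred_eq, ← sub_pos, key]
  constructor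
  · intro h; nlinarith
  · intro h; have : 0 < b ^ 2 - s.im ^ 2 := by linarith
    positivity

lemma bijOn_cpow_half {b : ℝ} (hb : 0 < b) :
    BijOn (· ^ (1 / 2 : ℂ)) (parabolaInterior b) (halfStrip b) :=
  InvOn.bijOn (f' := (· ^ 2))
    ⟨fun w _ => sq_cpow_half w, fun s hs => sq_cpow_half_of_mem_sqrtRange hs.1⟩
    (fun w hw => ⟨cpow_half_mem_sqrtRange w,
      (sq_mem_parabolaInterior_iff hb _).1 (by rwa [sq_cpow_half])⟩)
    (fun s hs => (sq_mem_parabolaInterior_iff hb s).2 hs.2)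

lemma bijOn_ofReal_mul_halfStrip {r : ℝ} (hr : 0 < r) (b : ℝ) :
    BijOn (fun t : ℂ => r * t) (halfStrip b) (halfStrip (r * b)) :=
  (Equiv.mulLeft₀ (r : ℂ) (ofReal_ne_zero.2 hr.ne')).bijOn fun t => by
    simp [halfStrip, sqrtRange, abs_mul, abs_of_pos hr, hr, hr.ne', mul_pos_iff_of_pos_left]

lemma bijOn_ofReal_mul_rightHalfPlane {r : ℝ} (hr : 0 < r) :
    BijOn (fun ζ : ℂ => r * ζ) {ζ | 0 < ζ.re} {ζ | 0 < ζ.re} :=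
  (Equiv.mulLeft₀ (r : ℂ) (ofReal_ne_zero.2 hr.ne')).bijOn fun t => by
    simp [hr, mul_pos_iff_of_pos_left]

lemma int_eq_zero_of_abs_two_mul_pi_lt {k : ℤ} (h : |2 * k * π| < 2 * π) : k = 0 := by
  rw [abs_mul, abs_of_pos Real.pi_pos, abs_mul, abs_two] at h
  have : |(k : ℝ)| < 1 := by nlinarith [Real.pi_pos]
  exact Int.abs_lt_one_iff.1 (by exact_mod_cast this)

-- `cosh t = cos (t i)`, so `cos_eq_cos_iff` leaves `t₂ = ±t₁` up to a period `2πik`.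
lemma cosh_injOn_halfStrip : InjOn cosh (halfStrip (π / 2)) := by
  intro t₁ ⟨h₁, hb₁⟩ t₂ ⟨h₂, hb₂⟩ h
  rw [mem_ofPred_eq, abs_lt] at hb₁ hb₂
  rw [← cos_mul_I, ← cos_mul_I, cos_eq_cos_iff] at h
  obtain ⟨k, hk | hk⟩ := h
  · have hre : -t₂.im = 2 * k * π - t₁.im := by simpa [sub_eq_add_neg] using congrArg re hk
    obtain rfl : k = 0 :=
      int_eq_zero_of_abs_two_mul_pi_lt (by rw [abs_lt]; constructor <;> linarith)
    exact (mul_left_injective₀ I_ne_zero (by simpa using hk)).symm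
  · have hre : -t₂.im = 2 * k * π + t₁.im := by simpa using congrArg re hk
    have him : t₂.re = -t₁.re := by simpa using congrArg im hk
    obtain ⟨hre₁, him₁⟩ : t₁.re = 0 ∧ 0 ≤ t₁.im := by
      rcases h₁ with h₁ | h₁ <;> rcases h₂ with h₂ | h₂ <;> first | exact h₁ | (exfalso; linarith)
    obtain ⟨hre₂, him₂⟩ : t₂.re = 0 ∧ 0 ≤ t₂.im := by
      rcases h₂ with h₂ | h₂ <;> first | exact h₂ | (exfalso; linarith)
    obtain rfl : k = 0 :=
      int_eq_zero_of_abs_two_mul_pi_lt (by rw [abs_lt]; constructor <;> linarith)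
    exact Complex.ext (by linarith) (by norm_num at hre; linarith)

lemma re_cosh (t : ℂ) : (cosh t).re = Real.cosh t.re * Real.cos t.im := by
  conv_lhs => rw [← re_add_im t, cosh_add, cosh_mul_I, sinh_mul_I]
  simp [← ofReal_cosh, ← ofReal_cos, ← ofReal_sinh, ← ofReal_sin]

lemma mapsTo_cosh_halfStrip : MapsTo cosh (halfStrip (π / 2)) {ζ | 0 < ζ.re} := fun t ht => by
  rw [mem_ofPred_eq, re_cosh]
  exact mul_pos (Real.cosh_pos _) (Real.cos_pos_of_mem_Ioo (abs_lt.1 ht.2))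

lemma exists_add_inv_eq_two_mul (ζ : ℂ) : ∃ e ≠ 0, e + e⁻¹ = 2 * ζ := by
  set r := (ζ ^ 2 - 1) ^ (1 / 2 : ℂ)
  have h : (ζ + r) * (ζ - r) = 1 := by linear_combination -sq_cpow_half (ζ ^ 2 - 1)
  refine ⟨ζ + r, left_ne_zero_of_mul_eq_one h, ?_⟩
  rw [inv_eq_of_mul_eq_one_right h]; ring

lemma surjOn_cosh_halfStrip : SurjOn cosh (halfStrip (π / 2)) {ζ | 0 < ζ.re} := by
  intro ζ hζ
  obtain ⟨e, he, hsum⟩ := exists_add_inv_eq_two_mul ζ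
  -- `Re e⁻¹ = Re e / |e|²` has the sign of `Re e`, and `Re e + Re e⁻¹ = 2 Re ζ > 0`.
  have hre : 0 < e.re := by
    have := congrArg re hsum
    simp only [add_re, inv_re, mul_re, re_ofNat, im_ofNat, zero_mul, sub_zero] at this
    by_contra! h
    have : e.re / normSq e ≤ 0 := div_nonpos_of_nonpos_of_nonneg h (normSq_nonneg e)
    linarith [mem_ofPred_eq ▸ hζ]
  have hcosh : cosh (log e) = ζ := by
    rw [cosh, exp_neg, exp_log he]; linear_combination hsum / 2
  have him : |(log e).im| < π / 2 := by
    rw [log_im]; exact abs_arg_lt_pi_div_two_iff.2 (.inl hre)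
  rcases mem_sqrtRange_or_neg_mem (log e) with h | h
  · exact ⟨log e, ⟨h, him⟩, hcosh⟩
  · exact ⟨-log e, ⟨h, by simpa using him⟩, by rwa [cosh_neg]⟩

lemma bijOn_cosh_halfStrip : BijOn cosh (halfStrip (π / 2)) {ζ | 0 < ζ.re} :=
  ⟨mapsTo_cosh_halfStrip, cosh_injOn_halfStrip, surjOn_cosh_halfStrip⟩

lemma one_add_ne_zero_of_re_pos {ζ : ℂ} (h : 0 < ζ.re) : 1 + ζ ≠ 0 := fun h' => by
  have := congrArg re h'
  simp only [add_re, one_re, zero_re] at this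
  linarith

lemma one_add_cayley {ζ : ℂ} (h : 1 + ζ ≠ 0) : 1 + cayley ζ = 2 / (1 + ζ) := by
  rw [cayley]; field_simp; ring

lemma cayley_cayley {ζ : ℂ} (h : 1 + ζ ≠ 0) : cayley (cayley ζ) = ζ := by
  rw [cayley, one_add_cayley h, cayley]
  field_simp
  ring

lemma norm_one_sub_lt_norm_one_add_iff (ζ : ℂ) : ‖1 - ζ‖ < ‖1 + ζ‖ ↔ 0 < ζ.re := by
  rw [← sq_lt_sq₀ (norm_nonneg _) (norm_nonneg _), ← normSq_eq_norm_sq, ← normSq_eq_norm_sq]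
  simp only [normSq_apply, sub_re, sub_im, add_re, add_im, one_re, one_im]
  constructor <;> intro h <;> nlinarith

lemma norm_cayley_lt_one_iff {ζ : ℂ} (h : 1 + ζ ≠ 0) : ‖cayley ζ‖ < 1 ↔ 0 < ζ.re := by
  rw [cayley, norm_div, div_lt_one (norm_pos_iff.2 h), norm_one_sub_lt_norm_one_add_iff]

lemma bijOn_cayley : BijOn cayley {ζ | 0 < ζ.re} (ball 0 1) := by
  have hball : ∀ ζ : ℂ, ‖ζ‖ < 1 → 1 + ζ ≠ 0 := fun ζ h h' => by
    rw [add_eq_zero_iff_eq_neg'] at h'; simp [h'] at h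
  have hball' : ∀ ζ : ℂ, ‖ζ‖ < 1 → 1 + cayley ζ ≠ 0 := fun ζ h => by
    rw [one_add_cayley (hball ζ h)]; exact div_ne_zero two_ne_zero (hball ζ h)
  refine InvOn.bijOn (f' := cayley)
    ⟨fun ζ hζ => cayley_cayley (one_add_ne_zero_of_re_pos hζ), fun ζ hζ => ?_⟩
    (fun ζ hζ => ?_) (fun ζ hζ => ?_)
  · exact cayley_cayley (hball ζ (mem_ball_zero_iff.1 hζ))
  · exact mem_ball_zero_iff.2 ((norm_cayley_lt_one_iff (one_add_ne_zero_of_re_pos hζ)).2 hζ)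
  · have hζ := mem_ball_zero_iff.1 hζ
    exact (norm_cayley_lt_one_iff (hball' ζ hζ)).1 (by rwa [cayley_cayley (hball ζ hζ)])

lemma cosh_eq_cosh_of_sq_eq_sq {u v : ℂ} (h : u ^ 2 = v ^ 2) : cosh u = cosh v := by
  rcases sq_eq_sq_iff_eq_or_eq_neg.1 h with rfl | rfl
  exacts [rfl, cosh_neg v]

lemma cosh_mul_cpow_half_eq (a w : ℂ) :
    cosh (a * w ^ (1 / 2 : ℂ)) = cosh (a * I * (-w) ^ (1 / 2 : ℂ)) :=
  cosh_eq_cosh_of_sq_eq_sq <| by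
    rw [mul_pow, mul_pow, mul_pow, sq_cpow_half, sq_cpow_half, I_sq]; ring

lemma differentiable_cosh_mul_cpow_half (a : ℂ) :
    Differentiable ℂ fun w : ℂ => cosh (a * w ^ (1 / 2 : ℂ)) := by
  have hoff : ∀ w ≠ 0, DifferentiableAt ℂ (fun w : ℂ => cosh (a * w ^ (1 / 2 : ℂ))) w := by
    intro w hw
    rcases mem_slitPlane_or_neg_mem_slitPlane hw with h | h
    · exact (differentiableAt_id.cpow_const h).const_mul a |>.ccosh
    · simp_rw [cosh_mul_cpow_half_eq a]
      exact (differentiableAt_neg_iff.2 differentiableAt_id |>.cpow_const h).const_mul _ |>.ccosh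
  intro w
  rcases eq_or_ne w 0 with rfl | hw
  · refine (analyticAt_of_differentiable_on_punctured_nhds_of_continuousAt
      (eventually_nhdsWithin_of_forall hoff) ?_).differentiableAt
    have hsqrt : ContinuousAt (fun w : ℂ => w ^ (1 / 2 : ℂ)) 0 :=
      continuousAt_cpow_const_of_re_pos (.inl le_rfl) (by norm_num)
    exact continuous_cosh.continuousAt.comp (hsqrt.const_mul a)
  · exact hoff w hw

lemma bijOn_affine_parabolaInterior {c μ : ℝ} (hc : 0 < c) (hμ : 0 < μ) :
    BijOn (fun z : ℂ => ↑(μ / c) * z - 1)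
      {z : ℂ | z.im ^ 2 < 16 * c / μ * (z.re + 3 * c / μ)} (parabolaInterior 2) := by
  refine ((Equiv.mulLeft₀ _ (ofReal_ne_zero.2 (div_pos hμ hc).ne')).trans
    (Equiv.subRight 1)).bijOn fun z => ?_
  have e₁ : (μ / c * z.im) ^ 2 = (μ / c) ^ 2 * z.im ^ 2 := by ring
  have e₂ : 4 * 2 ^ 2 * (μ / c * z.re - 1 + 2 ^ 2)
      = (μ / c) ^ 2 * (16 * c / μ * (z.re + 3 * c / μ)) := by field_simp; ring
  change ↑(μ / c) * z - 1 ∈ parabolaInterior 2 ↔ _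
  simp only [parabolaInterior, mem_ofPred_eq, sub_re, sub_im, re_ofReal_mul, im_ofReal_mul,
    one_re, one_im, sub_zero]
  rw [e₁, e₂, mul_lt_mul_iff_right₀ (by positivity)]

/-- `ψ(z) = (1 − √2·cosh((π/4)√(μz/c − 1)))/(1 + √2·cosh((π/4)√(μz/c − 1)))`
is a conformal (holomorphic bijective) map from the interior of the parabola
`{u+iv : v² = (16c/μ)(u + 3c/μ)}` onto the open unit disk, with `ψ(0) = 0`
and `ψ(−3c/μ) = 1`. -/
theorem stmt_8 (c μ : ℝ) (hc : 0 < c) (hμ : 0 < μ) :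
    let ψ : ℂ → ℂ := fun z =>
      (1 - Real.sqrt 2 * Complex.cosh (Complex.ofReal (Real.pi / 4) *
        ((Complex.ofReal (μ / c) * z - 1) ^ (1/2 : ℂ)))) /
      (1 + Real.sqrt 2 * Complex.cosh (Complex.ofReal (Real.pi / 4) *
        ((Complex.ofReal (μ / c) * z - 1) ^ (1/2 : ℂ))))
    let P : Set ℂ := {z : ℂ | z.im ^ 2 < (16 * c / μ) * (z.re + 3 * c / μ)}
    DifferentiableOn ℂ ψ P ∧ Set.BijOn ψ P (Metric.ball (0 : ℂ) 1) ∧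
      ψ 0 = 0 ∧ ψ (Complex.ofReal (-3 * c / μ)) = 1 := by
  intro ψ P
  set H : ℂ → ℂ := fun z => √2 * cosh (↑(π / 4) * (↑(μ / c) * z - 1) ^ (1 / 2 : ℂ))
  have hH : BijOn H P {ζ | 0 < ζ.re} := by
    have hscale := bijOn_ofReal_mul_halfStrip (r := π / 4) (by positivity) 2
    rw [show π / 4 * 2 = π / 2 by ring] at hscale
    exact (bijOn_ofReal_mul_rightHalfPlane (by positivity)).comp <| bijOn_cosh_halfStrip.comp <|
      hscale.comp <| (bijOn_cpow_half two_pos).comp (bijOn_affine_parabolaInterior hc hμ)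
  have hden : ∀ z ∈ P, 1 + H z ≠ 0 := fun z hz => one_add_ne_zero_of_re_pos (hH.mapsTo hz)
  have hHdiff : Differentiable ℂ H :=
    ((differentiable_cosh_mul_cpow_half _).comp (by fun_prop)).const_mul _
  refine ⟨?_, bijOn_cayley.comp hH, ?_, ?_⟩
  · exact ((differentiableOn_const 1).sub hHdiff.differentiableOn).div
      ((differentiableOn_const 1).add hHdiff.differentiableOn) hden
  · have hW : (↑(μ / c) * 0 - 1 : ℂ) = -((1 : ℝ) : ℂ) ^ 2 := by simp
    change cayley (√2 * cosh (_ * (↑(μ / c) * 0 - 1) ^ (1 / 2 : ℂ))) = 0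
    rw [hW, cosh_mul_neg_sq_cpow_half _ zero_le_one, ← ofReal_mul, ← ofReal_cos, mul_one,
      Real.cos_pi_div_four, ← ofReal_mul, mul_div_assoc', Real.mul_self_sqrt zero_le_two]
    simp [cayley]
  · have hW : (↑(μ / c) * ↑(-3 * c / μ) - 1 : ℂ) = -((2 : ℝ) : ℂ) ^ 2 := by
      rw [← ofReal_mul, show μ / c * (-3 * c / μ) = -3 by field_simp]; norm_num
    change cayley (√2 * cosh (_ * (↑(μ / c) * ↑(-3 * c / μ) - 1) ^ (1 / 2 : ℂ))) = 1
    rw [hW, cosh_mul_neg_sq_cpow_half _ zero_le_two, ← ofReal_mul, ← ofReal_cos,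
      show π / 4 * 2 = π / 2 by ring, Real.cos_pi_div_two]
    simp [cayley]
end

section
/- For c, μ > 0, the function F(s) = (π/4)(μ/c)·s/cosh((π/2)√(μs/c − 1)) satisfies F(0) = 1 (as a limit), F is holomorphic on {Re s > −3c/μ}, and F(s) → 0 as s → +∞ along the reals. -/
/-!
Write `q = μ / c` and `D s = cosh ((π/2) √(q s - 1))`. Since cosh is even, `D s` does not depend on
the branch of the square root: it equals `cos ((π/2) √(1 - q s))`, and `D` is entire. It has a
simple zero at `0` with `D' 0 = π q / 4`, so `F s = (π q / 4) / (D s / s)` extends holomorphically,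
with value `1` at `0`, to any region where `D` has no other zero. The zeros of `D` are the points
`(1 - (2k+1)²) / q`, and all of them except `0` satisfy `Re s ≤ -3 / q`. On the real axis
`cosh y ≥ y⁴ / 48` gives `F s = O(1 / s)`.
-/

open Filter Topology

namespace Complex

theorem cpow_one_half_sq (z : ℂ) : (z ^ (1 / 2 : ℂ)) ^ 2 = z := by
  rw [one_div]; exact cpow_ofNat_inv_pow z 2

theorem cosh_mul_cpow_one_half_eq_cos (t w : ℂ) :
    cosh (t * w ^ (1 / 2 : ℂ)) = cos (t * (-w) ^ (1 / 2 : ℂ)) := by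
  have hsq : ((-w) ^ (1 / 2 : ℂ)) ^ 2 = (w ^ (1 / 2 : ℂ) * I) ^ 2 := by
    rw [mul_pow, I_sq, cpow_one_half_sq, cpow_one_half_sq]; ring
  obtain h | h := sq_eq_sq_iff_eq_or_eq_neg.1 hsq
  · rw [h, ← mul_assoc, cos_mul_I]
  · rw [h, mul_neg, cos_neg, ← mul_assoc, cos_mul_I]

theorem differentiable_cosh_mul_cpow_one_half (t : ℂ) :
    Differentiable ℂ fun w => cosh (t * w ^ (1 / 2 : ℂ)) := by
  -- Off `0`, `w` or `-w` lies in the slit plane; at `0` the singularity is removable.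
  rw [← differentiableOn_univ,
    ← differentiableOn_compl_singleton_and_continuousAt_iff (c := 0) Filter.univ_mem]
  constructor
  · rintro w ⟨-, hw⟩
    refine DifferentiableAt.differentiableWithinAt ?_
    obtain hw | hw := mem_slitPlane_or_neg_mem_slitPlane hw
    · exact (differentiableAt_id.cpow_const hw).const_mul t |>.ccosh
    · simp_rw [cosh_mul_cpow_one_half_eq_cos t]
      exact (differentiableAt_id.neg.cpow_const hw).const_mul t |>.ccos
  · have : ContinuousAt (fun w : ℂ => w ^ (1 / 2 : ℂ)) 0 :=
      continuousAt_cpow_const_of_re_pos (by simp) (by norm_num)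
    exact continuous_cosh.continuousAt.comp (this.const_mul t)

theorem exists_int_of_cosh_mul_cpow_one_half_eq_zero {t w : ℂ}
    (h : cosh (t * w ^ (1 / 2 : ℂ)) = 0) :
    ∃ k : ℤ, t ^ 2 * w = -((2 * k + 1) * Real.pi / 2) ^ 2 := by
  obtain ⟨k, hk⟩ := cos_eq_zero_iff.1 (by rwa [cos_mul_I] : cos (t * w ^ (1 / 2 : ℂ) * I) = 0)
  refine ⟨k, ?_⟩
  rw [← hk, mul_pow, mul_pow, I_sq, cpow_one_half_sq]
  ring

end Complex

section SimpleZero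

variable {D : ℂ → ℂ} {a : ℂ}

theorem tendsto_mul_div_nhdsNE_of_hasDerivAt (hD0 : D 0 = 0) (hDa : HasDerivAt D a 0)
    (ha : a ≠ 0) : Tendsto (fun s => a * s / D s) (𝓝[≠] 0) (𝓝 1) := by
  have hslope : Tendsto (fun s => a / slope D 0 s) (𝓝[≠] 0) (𝓝 1) := by
    rw [← div_self ha]
    exact tendsto_const_nhds.div (hasDerivAt_iff_tendsto_slope.1 hDa) ha
  refine hslope.congr' (eventually_nhdsWithin_of_forall fun s _ => ?_)
  rw [slope_def_field, hD0, sub_zero, sub_zero, div_div_eq_mul_div]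

theorem exists_differentiableOn_eq_mul_div_of_hasDerivAt {U : Set ℂ}
    (hD : Differentiable ℂ D) (hD0 : D 0 = 0) (hDa : HasDerivAt D a 0) (ha : a ≠ 0)
    (hU : ∀ s ∈ U, s ≠ 0 → D s ≠ 0) :
    ∃ G : ℂ → ℂ, DifferentiableOn ℂ G U ∧ G 0 = 1 ∧ ∀ s ∈ U, s ≠ 0 → G s = a * s / D s := by
  have hdslope : ∀ s ≠ 0, dslope D 0 s = D s / s := fun s hs => by
    rw [dslope_of_ne _ hs, slope_def_field, hD0, sub_zero, sub_zero]
  have hdslope0 : dslope D 0 0 = a := by rw [dslope_same, hDa.deriv]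
  refine ⟨fun s => a / dslope D 0 s, fun s hs => ?_,
    show a / dslope D 0 0 = 1 by rw [hdslope0, div_self ha], fun s _ hs => ?_⟩
  · refine (DifferentiableAt.div (differentiableAt_const a) ?_ ?_).differentiableWithinAt
    · exact (Complex.differentiableOn_dslope Filter.univ_mem).2 hD.differentiableOn
        |>.differentiableAt Filter.univ_mem
    · rcases eq_or_ne s 0 with rfl | hs0
      · rwa [hdslope0]
      · rw [hdslope s hs0]; exact div_ne_zero (hU s hs hs0) hs0
  · simp only [hdslope s hs, div_div_eq_mul_div]

end SimpleZero

theorem pow_four_div_le_cosh {y : ℝ} (hy : 0 ≤ y) : y ^ 4 / 48 ≤ Real.cosh y := by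
  have h := Real.pow_div_factorial_le_exp y hy 4
  have := (Real.exp_pos (-y)).le
  rw [Real.cosh_eq]
  norm_num [Nat.factorial] at h
  linarith

theorem tendsto_div_cosh_mul_sqrt_atTop {b q : ℝ} (hb : 0 < b) (hq : 0 < q) :
    Tendsto (fun x => x / Real.cosh (b * √(q * x - 1))) atTop (𝓝 0) := by
  have hbound : ∀ x ≥ 2 / q, x / Real.cosh (b * √(q * x - 1)) ≤ 192 / (b ^ 4 * q ^ 2) / x := by
    intro x hx
    have hx0 : 0 < x := lt_of_lt_of_le (by positivity) hx
    have hqx : 2 ≤ q * x := by rwa [ge_iff_le, div_le_iff₀' hq] at hx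
    have hcosh : b ^ 4 * (q * x) ^ 2 / 192 ≤ Real.cosh (b * √(q * x - 1)) := by
      refine le_trans ?_ (pow_four_div_le_cosh (by positivity))
      have hsqrt : √(q * x - 1) ^ 4 = (q * x - 1) ^ 2 := by
        rw [show 4 = 2 * 2 by rfl, pow_mul, Real.sq_sqrt (by linarith)]
      rw [mul_pow b, hsqrt]
      have : (q * x) ^ 2 ≤ 4 * (q * x - 1) ^ 2 := by nlinarith
      have : 0 < b ^ 4 := by positivity
      nlinarith
    calc x / Real.cosh (b * √(q * x - 1)) ≤ x / (b ^ 4 * (q * x) ^ 2 / 192) :=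
          div_le_div_of_nonneg_left hx0.le (by positivity) hcosh
      _ = 192 / (b ^ 4 * q ^ 2) / x := by field_simp
  refine squeeze_zero' ?_ ((eventually_ge_atTop (2 / q)).mono hbound)
    (tendsto_const_nhds.div_atTop tendsto_id)
  filter_upwards [eventually_ge_atTop 0] with x hx
  exact div_nonneg hx (Real.cosh_pos _).le

/-- The denominator `D` of the transform `F`, with `q = μ / c`. -/
noncomputable def lstDenom (q : ℝ) (s : ℂ) : ℂ :=
  Complex.cosh (↑(Real.pi / 2) * (↑q * s - 1) ^ (1 / 2 : ℂ))

theorem lstDenom_eq_cos (q : ℝ) (s : ℂ) :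
    lstDenom q s = Complex.cos (↑(Real.pi / 2) * (1 - ↑q * s) ^ (1 / 2 : ℂ)) := by
  rw [lstDenom, Complex.cosh_mul_cpow_one_half_eq_cos, neg_sub]

theorem differentiable_lstDenom (q : ℝ) : Differentiable ℂ (lstDenom q) :=
  (Complex.differentiable_cosh_mul_cpow_one_half _).comp (by fun_prop)

theorem lstDenom_zero (q : ℝ) : lstDenom q 0 = 0 := by
  rw [lstDenom_eq_cos, mul_zero, sub_zero, Complex.one_cpow, mul_one, ← Complex.ofReal_cos,
    Real.cos_pi_div_two, Complex.ofReal_zero]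

theorem hasDerivAt_lstDenom_zero (q : ℝ) : HasDerivAt (lstDenom q) ↑(Real.pi / 4 * q) 0 := by
  have h := ((((hasDerivAt_id' (0 : ℂ)).const_mul (q : ℂ)).const_sub 1).cpow_const
    (c := 1 / 2) (by simp)).const_mul (↑(Real.pi / 2) : ℂ) |>.ccos
  rw [funext (lstDenom_eq_cos q)]
  convert h using 1
  rw [mul_zero, sub_zero, Complex.one_cpow, Complex.one_cpow, mul_one, ← Complex.ofReal_sin,
    Real.sin_pi_div_two]
  push_cast
  ring

theorem lstDenom_ne_zero {q : ℝ} (hq : 0 < q) {s : ℂ} (hs : -3 / q < s.re) (hs0 : s ≠ 0) :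
    lstDenom q s ≠ 0 := by
  intro h
  obtain ⟨k, hk⟩ := Complex.exists_int_of_cosh_mul_cpow_one_half_eq_zero h
  have hπ : (Real.pi : ℂ) ^ 2 ≠ 0 := pow_ne_zero 2 (Complex.ofReal_ne_zero.2 Real.pi_ne_zero)
  have hqs : (q : ℂ) * s = ((1 - (2 * k + 1) ^ 2 : ℤ) : ℂ) := by
    refine mul_left_cancel₀ hπ ?_
    push_cast at hk ⊢
    linear_combination 4 * hk
  have hre : q * s.re = ((1 - (2 * k + 1) ^ 2 : ℤ) : ℝ) := by
    simpa only [Complex.re_ofReal_mul, Complex.intCast_re] using congrArg Complex.re hqs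
  have hk4 : -3 < 1 - (2 * k + 1) ^ 2 := by
    rw [div_lt_iff₀ hq] at hs
    exact_mod_cast hre ▸ (by linarith : -3 < q * s.re)
  have hk : k = 0 ∨ k = -1 := by
    have : -2 < 2 * k + 1 ∧ 2 * k + 1 < 2 := ⟨by nlinarith, by nlinarith⟩
    omega
  apply hs0
  rcases hk with rfl | rfl <;> norm_num at hqs <;> simpa [hq.ne'] using hqs

theorem lstDenom_ofReal {q x : ℝ} (hx : 1 ≤ q * x) :
    lstDenom q x = Real.cosh (Real.pi / 2 * √(q * x - 1)) := by
  have hsqrt : ((q : ℂ) * x - 1) ^ (1 / 2 : ℂ) = (√(q * x - 1) : ℂ) := by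
    rw [Real.sqrt_eq_rpow, Complex.ofReal_cpow (by linarith)]
    push_cast
    ring_nf
  rw [lstDenom, hsqrt, ← Complex.ofReal_mul, ← Complex.ofReal_cosh]

/-- the function `F(s) = (π/4)(μ/c)·s/cosh((π/2)√(μs/c − 1))`
satisfies `F(0) = 1` (as a limit), extends holomorphically to `{Re s > −3c/μ}`,
and `F(s) → 0` as `s → +∞` along the reals. -/
theorem stmt_10 (c μ : ℝ) (hc : 0 < c) (hμ : 0 < μ) :
    let F : ℂ → ℂ := fun s =>
      Complex.ofReal ((Real.pi / 4) * (μ / c)) * s /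
        Complex.cosh (Complex.ofReal (Real.pi / 2) *
          ((Complex.ofReal (μ / c) * s - 1) ^ (1/2 : ℂ)))
    Tendsto F (nhdsWithin 0 {(0 : ℂ)}ᶜ) (nhds 1) ∧
    (∃ G : ℂ → ℂ, DifferentiableOn ℂ G {s : ℂ | s.re > -3 * c / μ} ∧
      G 0 = 1 ∧ ∀ s : ℂ, s.re > -3 * c / μ → s ≠ 0 → G s = F s) ∧
    Tendsto (fun s : ℝ => F (Complex.ofReal s)) atTop (nhds 0) := by
  intro F
  have hq : 0 < μ / c := div_pos hμ hc
  have ha : ((Real.pi / 4 * (μ / c) : ℝ) : ℂ) ≠ 0 := Complex.ofReal_ne_zero.2 (by positivity)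
  have hzeros : ∀ s ∈ {s : ℂ | s.re > -3 * c / μ}, s ≠ 0 → lstDenom (μ / c) s ≠ 0 :=
    fun s hs hs0 => lstDenom_ne_zero hq (by rwa [div_div_eq_mul_div]) hs0
  refine ⟨tendsto_mul_div_nhdsNE_of_hasDerivAt (lstDenom_zero _) (hasDerivAt_lstDenom_zero _) ha,
    exists_differentiableOn_eq_mul_div_of_hasDerivAt (differentiable_lstDenom _) (lstDenom_zero _)
      (hasDerivAt_lstDenom_zero _) ha hzeros, ?_⟩
  have hreal := (tendsto_div_cosh_mul_sqrt_atTop (by positivity : 0 < Real.pi / 2) hq).const_mul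
    (Real.pi / 4 * (μ / c))
  rw [mul_zero] at hreal
  refine ((Complex.continuous_ofReal.tendsto' 0 0 Complex.ofReal_zero).comp hreal).congr' ?_
  filter_upwards [eventually_ge_atTop (c / μ)] with x hx
  have hqx : 1 ≤ μ / c * x := by rwa [← div_le_iff₀' hq, one_div_div]
  change _ = ((Real.pi / 4 * (μ / c) : ℝ) : ℂ) * x / lstDenom (μ / c) x
  rw [Function.comp_apply, lstDenom_ofReal hqx]
  push_cast
  ring
end

section
/- For N ≥ n ≥ 1 integers, the partial fraction identity ∏_{k=1}^N [4k(k+1)] / [s + 4k(k+1)] = Σ_{n=1}^N [4n(n+1)/(s + 4n(n+1))] · (−1)^{n+1}(2n+1)·N!·(N+1)! / ((N−n)!·(N+n+1)!) holds for all real s not equal to any −4k(k+1). -/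
open Finset Polynomial

private lemma pf_P2 (m : ℕ) : ∀ N : ℕ,
    (m.factorial : ℝ) * ∏ k ∈ Icc 1 N, ((k : ℝ) + m) = ((N + m).factorial : ℝ) := by
  intro N
  induction N with
  | zero => simp
  | succ n ih =>
    rw [Finset.prod_Icc_succ_top (by omega)]
    have : (n + 1 + m).factorial = (n + 1 + m) * (n + m).factorial := by
      rw [show n + 1 + m = (n + m) + 1 by omega, Nat.factorial_succ]
    rw [this]
    push_cast
    rw [← ih]; ring

private lemma pf_P4 (n N : ℕ) (h : n ≤ N) :
    ∏ k ∈ Icc (n+1) N, ((k : ℝ) - n) = ((N - n).factorial : ℝ) := by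
  have : ∏ k ∈ Icc (n+1) N, ((k : ℝ) - n) = ∏ j ∈ Icc 1 (N - n), (j : ℝ) := by
    apply Finset.prod_nbij' (fun k => k - n) (fun j => j + n)
    · intro k hk; simp only [mem_Icc] at *; omega
    · intro j hj; simp only [mem_Icc] at *; omega
    · intro k hk; simp only [mem_Icc] at hk; omega
    · intro j hj; simp only [mem_Icc] at hj; omega
    · intro k hk; simp only [mem_Icc] at hk
      have : ((k - n : ℕ) : ℝ) = (k : ℝ) - n := by
        push_cast [Nat.cast_sub (by omega : n ≤ k)]; ring
      rw [this]
  rw [this]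
  simpa using pf_P2 0 (N - n)

private lemma pf_P5 (m : ℕ) :
    ∏ k ∈ Icc 1 m, ((k : ℝ) - (m+1)) = (-1)^m * (m.factorial : ℝ) := by
  have : ∏ k ∈ Icc 1 m, ((k : ℝ) - (m+1)) = ∏ j ∈ Icc 1 m, (-(j:ℝ)) := by
    apply Finset.prod_nbij' (fun k => m + 1 - k) (fun j => m + 1 - j)
    · intro k hk; simp only [mem_Icc] at *; omega
    · intro j hj; simp only [mem_Icc] at *; omega
    · intro k hk; simp only [mem_Icc] at hk; omega
    · intro j hj; simp only [mem_Icc] at hj; omega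
    · intro k hk; simp only [mem_Icc] at hk
      have : ((m + 1 - k : ℕ) : ℝ) = (m : ℝ) + 1 - k := by
        push_cast [Nat.cast_sub (by omega : k ≤ m + 1)]; ring
      rw [this]; ring
  rw [this]
  have h1 : ∏ j ∈ Icc 1 m, (j : ℝ) = (m.factorial : ℝ) := by simpa using pf_P2 0 m
  calc ∏ j ∈ Icc 1 m, (-(j:ℝ)) = ∏ j ∈ Icc 1 m, ((-1) * (j:ℝ)) := by
        apply Finset.prod_congr rfl; intros; ring
    _ = (-1)^m * (m.factorial : ℝ) := by
        rw [Finset.prod_mul_distrib, Finset.prod_const, h1, Nat.card_Icc]; norm_num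

private lemma pf_lagrange (S : Finset ℕ) (v : ℕ → ℝ) (hv : Set.InjOn v S)
    (hS : S.Nonempty) (t : ℝ) :
    ∑ n ∈ S, ∏ k ∈ S.erase n, ((v n - v k)⁻¹ * (t - v k)) = 1 := by
  have h := Lagrange.sum_basis hv hS
  have := congrArg (Polynomial.eval t) h
  simpa [Lagrange.basis, Lagrange.basisDivisor, eval_finset_sum, eval_prod] using this

private lemma pf_diff_ne {k n : ℕ} (h : k ≠ n) :
    4*(k:ℝ)*((k:ℝ)+1) - 4*(n:ℝ)*((n:ℝ)+1) ≠ 0 := by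
  have heq : 4*(k:ℝ)*((k:ℝ)+1) - 4*(n:ℝ)*((n:ℝ)+1)
      = 4*((k:ℝ)-(n:ℝ))*((k:ℝ)+(n:ℝ)+1) := by ring
  rw [heq]
  have h1 : (k:ℝ) - (n:ℝ) ≠ 0 := sub_ne_zero.2 (by exact_mod_cast h)
  have h2 : (0:ℝ) < (k:ℝ) + (n:ℝ) + 1 := by positivity
  positivity

private lemma pf_coeff (N n : ℕ) (h1 : 1 ≤ n) (h2 : n ≤ N) :
    ∏ k ∈ (Icc 1 N).erase n,
        ((4*(k:ℝ)*((k:ℝ)+1)) / (4*(k:ℝ)*((k:ℝ)+1) - 4*(n:ℝ)*((n:ℝ)+1)))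
    = (-1 : ℝ)^(n+1) * (2*(n:ℝ)+1) * (N.factorial : ℝ) * ((N+1).factorial : ℝ) /
        (((N-n).factorial : ℝ) * ((N+n+1).factorial : ℝ)) := by
  obtain ⟨m, rfl⟩ : ∃ m, n = m + 1 := ⟨n - 1, by omega⟩
  set E := (Icc 1 N).erase (m+1) with hE
  have hnmem : (m+1) ∈ Icc 1 N := by simp only [mem_Icc]; omega
  -- rewrite each factor
  have hstep : ∏ k ∈ E, ((4*(k:ℝ)*((k:ℝ)+1)) / (4*(k:ℝ)*((k:ℝ)+1) - 4*((m+1:ℕ):ℝ)*(((m+1:ℕ):ℝ)+1)))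
      = (∏ k ∈ E, (k:ℝ)) * (∏ k ∈ E, ((k:ℝ)+1)) /
        ((∏ k ∈ E, ((k:ℝ) - ((m:ℝ)+1))) * (∏ k ∈ E, ((k:ℝ) + (m:ℝ) + 2))) := by
    rw [← Finset.prod_mul_distrib, ← Finset.prod_mul_distrib, ← Finset.prod_div_distrib]
    apply Finset.prod_congr rfl
    intro k hk
    have hd : 4*(k:ℝ)*((k:ℝ)+1) - 4*((m+1:ℕ):ℝ)*(((m+1:ℕ):ℝ)+1)
        = 4*(((k:ℝ) - ((m:ℝ)+1)) * ((k:ℝ) + (m:ℝ) + 2)) := by push_cast; ring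
    have hnum : 4*(k:ℝ)*((k:ℝ)+1) = 4*((k:ℝ)*((k:ℝ)+1)) := by ring
    rw [hd, hnum, mul_div_mul_left _ _ (by norm_num : (4:ℝ) ≠ 0)]
  rw [hstep]
  -- the four products
  have hP1 : ((m:ℝ)+1) * ∏ k ∈ E, (k:ℝ) = (N.factorial : ℝ) := by
    have := Finset.mul_prod_erase (Icc 1 N) (fun k => (k:ℝ)) hnmem
    have hIcc : ∏ k ∈ Icc 1 N, (k:ℝ) = (N.factorial : ℝ) := by simpa using pf_P2 0 N
    rw [← hIcc, ← this]; push_cast; ring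
  have hP2' : ((m:ℝ)+2) * ∏ k ∈ E, ((k:ℝ)+1) = ((N+1).factorial : ℝ) := by
    have := Finset.mul_prod_erase (Icc 1 N) (fun k => ((k:ℝ)+1)) hnmem
    have hIcc : ∏ k ∈ Icc 1 N, ((k:ℝ)+1) = ((N+1).factorial : ℝ) := by
      have := pf_P2 1 N
      simpa using this
    rw [← hIcc, ← this]; push_cast; ring
  have hP4' : ((m+2).factorial : ℝ) * ((2*(m:ℝ)+3) * ∏ k ∈ E, ((k:ℝ) + (m:ℝ) + 2))
      = ((N+m+2).factorial : ℝ) := by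
    have hmp := Finset.mul_prod_erase (Icc 1 N) (fun k => ((k:ℝ) + (m:ℝ) + 2)) hnmem
    have hIcc : ∏ k ∈ Icc 1 N, ((k:ℝ) + (m:ℝ) + 2)
        = ((N+m+2).factorial : ℝ) / ((m+2).factorial : ℝ) := by
      have h := pf_P2 (m+2) N
      have : ∏ k ∈ Icc 1 N, ((k:ℝ) + ((m+2:ℕ):ℝ)) = ∏ k ∈ Icc 1 N, ((k:ℝ) + (m:ℝ) + 2) := by
        apply Finset.prod_congr rfl; intros; push_cast; ring
      rw [this] at h
      rw [eq_div_iff (by positivity)]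
      rw [mul_comm] at h
      rw [h]; norm_cast
    rw [hIcc] at hmp
    have hfac : ((m+2).factorial : ℝ) ≠ 0 := by positivity
    field_simp at hmp ⊢
    push_cast at hmp ⊢
    try nlinarith [hmp]
  have hP3' : ∏ k ∈ E, ((k:ℝ) - ((m:ℝ)+1))
      = (-1)^m * (m.factorial : ℝ) * ((N-(m+1)).factorial : ℝ) := by
    have hsplit : E = Icc 1 m ∪ Icc (m+2) N := by
      ext k; simp only [hE, mem_erase, mem_Icc, mem_union]; omega
    have hdisj : Disjoint (Icc 1 m) (Icc (m+2) N) := by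
      rw [Finset.disjoint_left]; intro k hk hk'
      simp only [mem_Icc] at hk hk'; omega
    rw [hsplit, Finset.prod_union hdisj]
    have e1 : ∏ k ∈ Icc 1 m, ((k:ℝ) - ((m:ℝ)+1)) = (-1)^m * (m.factorial : ℝ) := pf_P5 m
    have e2 : ∏ k ∈ Icc (m+2) N, ((k:ℝ) - ((m:ℝ)+1)) = ((N-(m+1)).factorial : ℝ) := by
      have := pf_P4 (m+1) N (by omega)
      have hc : ∏ k ∈ Icc (m+2) N, ((k:ℝ) - ((m+1:ℕ):ℝ)) = ∏ k ∈ Icc (m+2) N, ((k:ℝ) - ((m:ℝ)+1)) := by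
        apply Finset.prod_congr rfl; intros; push_cast; ring
      rw [← hc]; exact this
    rw [e1, e2]
  -- final algebra
  rw [hP3']
  have hm1 : ((m:ℝ)+1) ≠ 0 := by positivity
  have hm2 : ((m:ℝ)+2) ≠ 0 := by positivity
  have hm3 : (2*(m:ℝ)+3) ≠ 0 := by positivity
  have hfm : (m.factorial : ℝ) ≠ 0 := by positivity
  have hfm2 : ((m+2).factorial : ℝ) ≠ 0 := by positivity
  have hfN : ((N-(m+1)).factorial : ℝ) ≠ 0 := by positivity
  have hfN2 : ((N+m+2).factorial : ℝ) ≠ 0 := by positivity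
  have hneg : ((-1:ℝ))^m ≠ 0 := by
    apply pow_ne_zero; norm_num
  have ha : ∏ k ∈ E, (k:ℝ) = (N.factorial : ℝ) / ((m:ℝ)+1) := by
    rw [eq_div_iff hm1]; rw [mul_comm] at hP1; exact hP1
  have hb : ∏ k ∈ E, ((k:ℝ)+1) = ((N+1).factorial : ℝ) / ((m:ℝ)+2) := by
    rw [eq_div_iff hm2]; rw [mul_comm] at hP2'; exact hP2'
  have hd : ∏ k ∈ E, ((k:ℝ) + (m:ℝ) + 2)
      = ((N+m+2).factorial : ℝ) / (((m+2).factorial : ℝ) * (2*(m:ℝ)+3)) := by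
    rw [eq_div_iff (by positivity)]
    nlinarith [hP4']
  rw [ha, hb, hd]
  have hsq : ((-1:ℝ))^(m*2) = 1 := by rw [pow_mul']; norm_num
  have hcastfix : ((N + (m+1) + 1).factorial : ℝ) = ((N+m+2).factorial : ℝ) := by
    norm_cast
  have hfaceq : ((m+2).factorial : ℝ) = ((m:ℝ)+2) * ((m:ℝ)+1) * (m.factorial : ℝ) := by
    have : (m+2).factorial = (m+2) * ((m+1) * m.factorial) := by
      rw [Nat.factorial_succ, Nat.factorial_succ]
    rw [this]; push_cast; ring
  rw [hcastfix, hfaceq]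
  push_cast
  field_simp
  ring_nf
  simp only [hsq, one_mul, mul_one]
  try ring

/-- partial fraction identity
`∏_{k=1}^N (4k(k+1))/(s+4k(k+1))
 = Σ_{n=1}^N (4n(n+1)/(s+4n(n+1)))·(−1)^{n+1}(2n+1)·N!(N+1)!/((N−n)!(N+n+1)!)`
for all real `s` avoiding the poles `−4k(k+1)`. -/
theorem stmt_16 (N : ℕ) (hN : 1 ≤ N) (s : ℝ)
    (hs : ∀ k ∈ Finset.Icc 1 N, s ≠ -(4 * (k : ℝ) * ((k : ℝ) + 1))) :
    (∏ k ∈ Finset.Icc 1 N,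
        (4 * (k : ℝ) * ((k : ℝ) + 1)) / (s + 4 * (k : ℝ) * ((k : ℝ) + 1)))
    = ∑ n ∈ Finset.Icc 1 N,
        (4 * (n : ℝ) * ((n : ℝ) + 1)) / (s + 4 * (n : ℝ) * ((n : ℝ) + 1)) *
          ((-1 : ℝ) ^ (n + 1) * (2 * (n : ℝ) + 1) *
            (Nat.factorial N : ℝ) * (Nat.factorial (N + 1) : ℝ) /
            ((Nat.factorial (N - n) : ℝ) * (Nat.factorial (N + n + 1) : ℝ))) := by
  have hsk : ∀ k ∈ Icc 1 N, s + 4 * (k : ℝ) * ((k : ℝ) + 1) ≠ 0 := by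
    intro k hk h
    exact hs k hk (by linarith)
  set v : ℕ → ℝ := fun k => -(4 * (k : ℝ) * ((k : ℝ) + 1)) with hv
  have hinj : Set.InjOn v (Icc 1 N : Finset ℕ) := by
    intro a _ b _ hab
    by_contra hne
    exact pf_diff_ne hne (by simp only [hv] at hab; linarith)
  have hSne : (Icc 1 N).Nonempty := ⟨1, by simp only [mem_Icc]; omega⟩
  have lag := pf_lagrange (Icc 1 N) v hinj hSne s
  calc (∏ k ∈ Icc 1 N, (4 * (k : ℝ) * ((k : ℝ) + 1)) / (s + 4 * (k : ℝ) * ((k : ℝ) + 1)))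
      = (∏ k ∈ Icc 1 N, (4 * (k : ℝ) * ((k : ℝ) + 1)) / (s + 4 * (k : ℝ) * ((k : ℝ) + 1))) *
        ∑ n ∈ Icc 1 N, ∏ k ∈ (Icc 1 N).erase n, ((v n - v k)⁻¹ * (s - v k)) := by
        rw [lag, mul_one]
    _ = ∑ n ∈ Icc 1 N,
          (∏ k ∈ Icc 1 N, (4 * (k : ℝ) * ((k : ℝ) + 1)) / (s + 4 * (k : ℝ) * ((k : ℝ) + 1))) *
          ∏ k ∈ (Icc 1 N).erase n, ((v n - v k)⁻¹ * (s - v k)) := by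
        rw [Finset.mul_sum]
    _ = ∑ n ∈ Icc 1 N,
        (4 * (n : ℝ) * ((n : ℝ) + 1)) / (s + 4 * (n : ℝ) * ((n : ℝ) + 1)) *
          ((-1 : ℝ) ^ (n + 1) * (2 * (n : ℝ) + 1) *
            (Nat.factorial N : ℝ) * (Nat.factorial (N + 1) : ℝ) /
            ((Nat.factorial (N - n) : ℝ) * (Nat.factorial (N + n + 1) : ℝ))) := by
        apply Finset.sum_congr rfl
        intro n hn
        simp only [mem_Icc] at hn
        have hnmem : n ∈ Icc 1 N := by simp only [mem_Icc]; omega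
        -- split off the n factor of the big product
        rw [← Finset.mul_prod_erase (Icc 1 N)
          (fun k => (4 * (k : ℝ) * ((k : ℝ) + 1)) / (s + 4 * (k : ℝ) * ((k : ℝ) + 1))) hnmem]
        rw [mul_assoc, ← Finset.prod_mul_distrib]
        have hprod : ∏ k ∈ (Icc 1 N).erase n,
            ((4 * (k : ℝ) * ((k : ℝ) + 1)) / (s + 4 * (k : ℝ) * ((k : ℝ) + 1)) *
              ((v n - v k)⁻¹ * (s - v k)))
            = ∏ k ∈ (Icc 1 N).erase n,
            ((4*(k:ℝ)*((k:ℝ)+1)) / (4*(k:ℝ)*((k:ℝ)+1) - 4*(n:ℝ)*((n:ℝ)+1))) := by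
          apply Finset.prod_congr rfl
          intro k hk
          have hkmem : k ∈ Icc 1 N := Finset.mem_of_mem_erase hk
          have hkne : k ≠ n := Finset.ne_of_mem_erase hk
          have h1 : s + 4 * (k : ℝ) * ((k : ℝ) + 1) ≠ 0 := hsk k hkmem
          have h2 : 4*(k:ℝ)*((k:ℝ)+1) - 4*(n:ℝ)*((n:ℝ)+1) ≠ 0 := pf_diff_ne hkne
          simp only [hv]
          have hv1 : -(4 * (n : ℝ) * ((n : ℝ) + 1)) - -(4 * (k : ℝ) * ((k : ℝ) + 1))
              = 4*(k:ℝ)*((k:ℝ)+1) - 4*(n:ℝ)*((n:ℝ)+1) := by ring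
          have hv2 : s - -(4 * (k : ℝ) * ((k : ℝ) + 1)) = s + 4 * (k : ℝ) * ((k : ℝ) + 1) := by
            ring
          rw [hv1, hv2]
          field_simp
        rw [hprod, pf_coeff N n hn.1 hn.2]
end

section
/- Let {E_n} be i.i.d. Exp(1) random variables. The random variable C = (2/π²) Σ_{n=1}^∞ E_n/(n − 1/2)² has Laplace transform E[e^{−sC}] = 1/cosh(√(2s)) for all s ≥ 0. -/
/-!
Write `sC = ∑ aₙ Eₙ₊₁` with `aₙ = 2s / (π² (n + 1/2)²)`. An `Exp(1)` variable has
`E[e^{-aE}] = 1 / (1 + a)`, so by independence the partial sums have Laplace transform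
`∏_{n<N} (1 + aₙ)⁻¹`. The integrands `e^{-∑_{n<N} aₙ Eₙ₊₁}` lie in `[0, 1]`, and since
`∑ aₙ < ∞` and `E|Eₙ| < ∞` the series converges almost surely, so dominated convergence
identifies the limit of these products with `E[e^{-sC}]`. That limit is `1 / cosh √(2s)` by
Euler's product `cosh (πx) = ∏ (1 + 4x² / (2k+1)²)`, which follows from the sine product
through `sinh (2πx) = 2 sinh (πx) cosh (πx)`.
-/

open MeasureTheory ProbabilityTheory

open Filter Topology Finset Real

theorem Finset.prod_range_two_mul {M : Type*} [CommMonoid M] (f : ℕ → M) (n : ℕ) :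
    ∏ j ∈ range (2 * n), f j =
      (∏ k ∈ range n, f (2 * k)) * ∏ k ∈ range n, f (2 * k + 1) := by
  induction n with
  | zero => simp
  | succ n ih =>
    rw [Nat.mul_succ, prod_range_succ, prod_range_succ, ih, prod_range_succ, prod_range_succ]
    ac_rfl

theorem Real.tendsto_euler_sinh_prod (x : ℝ) :
    Tendsto (fun n : ℕ => π * x * ∏ j ∈ range n, (1 + x ^ 2 / ((j : ℝ) + 1) ^ 2))
      atTop (𝓝 (sinh (π * x))) := by
  have h := (Complex.tendsto_euler_sin_prod (x * Complex.I)).mul_const (-Complex.I)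
  have hsin : Complex.sin (π * (x * Complex.I)) * -Complex.I = (sinh (π * x) : ℝ) := by
    rw [← mul_assoc, ← Complex.ofReal_mul, Complex.sin_mul_I, Complex.ofReal_sinh, mul_assoc]
    simp
  rw [hsin] at h
  refine tendsto_ofReal_iff.mp (h.congr fun n => ?_)
  push_cast
  simp only [mul_pow, Complex.I_sq]
  ring_nf
  simp

theorem Real.tendsto_euler_cosh_prod (x : ℝ) :
    Tendsto (fun n : ℕ => ∏ k ∈ range n, (1 + (2 * x) ^ 2 / (2 * (k : ℝ) + 1) ^ 2))
      atTop (𝓝 (cosh (π * x))) := by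
  rcases eq_or_ne x 0 with rfl | hx
  · simp
  have hsinh : sinh (π * x) ≠ 0 := by simp [pi_ne_zero, hx]
  have hdouble := (tendsto_euler_sinh_prod (2 * x)).comp (tendsto_id.const_mul_atTop' two_pos)
  have hquot := hdouble.div ((tendsto_euler_sinh_prod x).const_mul 2) (by simpa using hsinh)
  rw [show π * (2 * x) = 2 * (π * x) by ring, sinh_two_mul, mul_assoc,
    mul_div_mul_left _ _ two_ne_zero, mul_div_cancel_left₀ _ hsinh] at hquot
  refine hquot.congr fun n => ?_
  have hodd (k : ℕ) : 1 + (2 * x) ^ 2 / (((2 * k + 1 : ℕ) : ℝ) + 1) ^ 2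
      = 1 + x ^ 2 / ((k : ℝ) + 1) ^ 2 := by
    push_cast
    field_simp
    ring
  have heven (k : ℕ) : (1 + (2 * x) ^ 2 / (((2 * k : ℕ) : ℝ) + 1) ^ 2)
      = 1 + (2 * x) ^ 2 / (2 * (k : ℝ) + 1) ^ 2 := by
    push_cast; rfl
  have hpos : 0 < ∏ j ∈ range n, (1 + x ^ 2 / ((j : ℝ) + 1) ^ 2) :=
    prod_pos fun j _ => by positivity
  simp only [Pi.div_apply, Function.comp_apply, id, prod_range_two_mul, hodd, heven]
  field_simp

theorem Real.tendsto_euler_inv_cosh_sqrt_prod {s : ℝ} (hs : 0 ≤ s) :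
    Tendsto (fun N : ℕ => ∏ n ∈ range N, (1 + 2 * s / (π ^ 2 * ((n : ℝ) + 1 / 2) ^ 2))⁻¹)
      atTop (𝓝 (cosh √(2 * s))⁻¹) := by
  have h := (tendsto_euler_cosh_prod (√(2 * s) / π)).inv₀ (cosh_pos _).ne'
  rw [mul_div_cancel₀ _ pi_ne_zero] at h
  refine h.congr fun N => ?_
  rw [← prod_inv_distrib]
  refine prod_congr rfl fun n _ => ?_
  rw [mul_pow, div_pow, sq_sqrt (by linarith)]
  field_simp

namespace ProbabilityTheory

theorem expMeasure_eq_withDensity_restrict (r : ℝ) :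
    expMeasure r = (volume.restrict (Set.Ici 0)).withDensity
      fun x => ENNReal.ofReal (r * exp (-(r * x))) := by
  rw [← withDensity_indicator measurableSet_Ici]
  refine congrArg volume.withDensity (funext fun x => ?_)
  change exponentialPDF r x = _
  by_cases hx : 0 ≤ x <;> simp [exponentialPDF_eq, hx]

theorem ae_nonneg_expMeasure (r : ℝ) : ∀ᵐ x ∂expMeasure r, 0 ≤ x := by
  rw [expMeasure_eq_withDensity_restrict]
  exact (withDensity_absolutelyContinuous _ _).ae_le (ae_restrict_mem measurableSet_Ici)

theorem integral_expMeasure {r : ℝ} (hr : 0 < r) (g : ℝ → ℝ) :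
    ∫ x, g x ∂expMeasure r = ∫ x in Set.Ioi 0, r * exp (-(r * x)) * g x := by
  rw [expMeasure_eq_withDensity_restrict, ← integral_Ici_eq_integral_Ioi,
    integral_withDensity_eq_integral_toReal_smul (by fun_prop) (by simp)]
  refine integral_congr_ae (ae_of_all _ fun x => ?_)
  simp only [smul_eq_mul]
  rw [ENNReal.toReal_ofReal (by positivity)]

theorem integrable_id_expMeasure {r : ℝ} (hr : 0 < r) : Integrable id (expMeasure r) := by
  rw [expMeasure_eq_withDensity_restrict, integrable_withDensity_iff (by fun_prop) (by simp),
    ← IntegrableOn, integrableOn_Ici_iff_integrableOn_Ioi]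
  have h := integrableOn_rpow_mul_exp_neg_mul_rpow (s := 1) (p := 1) (by norm_num) one_pos hr
  refine IntegrableOn.congr_fun (h.const_mul r) (fun x _ => ?_) measurableSet_Ioi
  simp only [rpow_one, id, neg_mul]
  rw [ENNReal.toReal_ofReal (by positivity)]
  ring

theorem integral_exp_neg_mul_expMeasure {r c : ℝ} (hr : 0 < r) (hc : -r < c) :
    ∫ x, exp (-(c * x)) ∂expMeasure r = r / (r + c) := by
  calc ∫ x, exp (-(c * x)) ∂expMeasure r
      = ∫ x in Set.Ioi 0, r * exp (-(r + c) * x) := by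
        rw [integral_expMeasure hr]
        congr with x
        rw [mul_assoc, ← exp_add]
        ring_nf
    _ = r / (r + c) := by
        rw [integral_const_mul, integral_exp_mul_Ioi (by linarith), mul_zero, exp_zero]
        field_simp

section Independent

variable {Ω : Type*} {mΩ : MeasurableSpace Ω} {P : Measure Ω}

theorem iIndepFun.tendsto_prod_integral_exp_neg {X : ℕ → Ω → ℝ}
    (hindep : iIndepFun X P) (hX : ∀ n, AEMeasurable (X n) P) (hnonneg : ∀ n, 0 ≤ᵐ[P] X n)
    (hsum : ∀ᵐ ω ∂P, Summable fun n => X n ω) :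
    Tendsto (fun N => ∏ n ∈ range N, ∫ ω, exp (-X n ω) ∂P) atTop
      (𝓝 (∫ ω, exp (-∑' n, X n ω) ∂P)) := by
  have := hindep.isProbabilityMeasure
  have hpartial (N : ℕ) :
      ∏ n ∈ range N, ∫ ω, exp (-X n ω) ∂P = ∫ ω, exp (-∑ n ∈ range N, X n ω) ∂P := by
    simpa [mgf, Finset.sum_apply] using (hindep.mgf_sum₀ (t := -1) hX (range N)).symm
  simp_rw [hpartial]
  refine tendsto_integral_of_dominated_convergence (fun _ => 1)
    (fun N => by fun_prop) (integrable_const 1) (fun N => ?_) ?_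
  · filter_upwards [ae_all_iff.2 hnonneg] with ω hω
    rw [norm_of_nonneg (exp_pos _).le, exp_le_one_iff, neg_nonpos]
    exact sum_nonneg fun n _ => hω n
  · filter_upwards [hsum] with ω hω
    exact (continuous_exp.tendsto _).comp hω.hasSum.tendsto_sum_nat.neg

theorem ae_summable_mul_of_hasLaw {X : ℕ → Ω → ℝ} {μ : Measure ℝ}
    (hX : ∀ n, HasLaw (X n) μ P) (hμ : Integrable id μ) {a : ℕ → ℝ} (ha : Summable a) :
    ∀ᵐ ω ∂P, Summable fun n => a n * X n ω := by
  have hnorm (n : ℕ) : eLpNorm (fun ω => a n * X n ω) 1 P = ‖a n‖ₑ * eLpNorm id 1 μ := by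
    change eLpNorm (a n • X n) 1 P = _
    rw [eLpNorm_const_smul, ← (hX n).map_eq,
      eLpNorm_map_measure ((hX n).map_eq ▸ hμ.1) (hX n).aemeasurable, Function.id_comp]
  have hfin : ∑' n, eLpNorm (fun ω => a n * X n ω) 1 P ≠ ⊤ := by
    simp_rw [hnorm, ENNReal.tsum_mul_right]
    exact ENNReal.mul_ne_top (tsum_enorm_ne_top_iff_summable_norm.2 ha.norm)
      (memLp_one_iff_integrable.2 hμ).eLpNorm_ne_top
  filter_upwards [summable_norm_of_tsum_eLpNorm_ne_top le_rfl
    (fun n => ((hX n).aemeasurable.const_mul (a n)).aestronglyMeasurable) hfin] with ω hω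
  exact hω.of_norm

theorem iIndepFun.tendsto_prod_inv_one_add_of_hasLaw_expMeasure {E : ℕ → Ω → ℝ}
    (hindep : iIndepFun E P) (hE : ∀ n, HasLaw (E n) (expMeasure 1) P) {a : ℕ → ℝ}
    (ha_nonneg : ∀ n, 0 ≤ a n) (ha : Summable a) :
    Tendsto (fun N => ∏ n ∈ range N, (1 + a n)⁻¹) atTop
      (𝓝 (∫ ω, exp (-∑' n, a n * E n ω) ∂P)) := by
  have hindep' : iIndepFun (fun n ω => a n * E n ω) P :=
    hindep.comp _ fun n => measurable_const_mul (a n)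
  have hnonneg (n : ℕ) : 0 ≤ᵐ[P] fun ω => a n * E n ω := by
    filter_upwards [ae_of_ae_map (hE n).aemeasurable ((hE n).map_eq ▸ ae_nonneg_expMeasure 1)]
      with ω hω
    exact mul_nonneg (ha_nonneg n) hω
  have hfactor (n : ℕ) : ∫ ω, exp (-(a n * E n ω)) ∂P = (1 + a n)⁻¹ := by
    rw [← one_div, ← integral_exp_neg_mul_expMeasure one_pos (by linarith [ha_nonneg n])]
    exact (hE n).integral_comp (f := fun x => exp (-(a n * x))) (by fun_prop)
  refine (hindep'.tendsto_prod_integral_exp_neg (fun n => by fun_prop) hnonneg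
    (ae_summable_mul_of_hasLaw hE (integrable_id_expMeasure one_pos) ha)).congr fun N => ?_
  exact prod_congr rfl fun n _ => hfactor n

end Independent

end ProbabilityTheory

theorem stmt_18_general {Ω : Type*} [MeasureSpace Ω] {P : Measure Ω}
    (E : ℕ → Ω → ℝ)
    (hindep : iIndepFun E P)
    (hlaw : ∀ n, Measure.map (E n) P = expMeasure 1)
    (s : ℝ) (hs : 0 ≤ s) :
    ∫ ω, Real.exp (-s * ((2 / Real.pi ^ 2) *
        ∑' n : ℕ, E (n + 1) ω / ((n + 1 : ℝ) - 1/2) ^ 2)) ∂P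
      = 1 / Real.cosh (Real.sqrt (2 * s)) := by
  have := isProbabilityMeasure_expMeasure one_pos
  have hE (n : ℕ) : HasLaw (E (n + 1)) (expMeasure 1) P :=
    ⟨.of_map_ne_zero (hlaw (n + 1) ▸ IsProbabilityMeasure.ne_zero _), hlaw (n + 1)⟩
  set a : ℕ → ℝ := fun n => 2 * s / (π ^ 2 * ((n : ℝ) + 1 / 2) ^ 2)
  have ha : Summable a := by
    refine (((summable_one_div_nat_add_rpow (1 / 2) 2).2 one_lt_two).mul_left
      (2 * s / π ^ 2)).congr fun n => ?_
    simp only [a, rpow_two, sq_abs]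
    field_simp
  have hintegrand (ω : Ω) :
      -s * ((2 / π ^ 2) * ∑' n : ℕ, E (n + 1) ω / ((n + 1 : ℝ) - 1/2) ^ 2)
        = -∑' n, a n * E (n + 1) ω := by
    rw [neg_mul, ← tsum_mul_left, ← tsum_mul_left]
    refine congrArg (fun t => -t) (tsum_congr fun n => ?_)
    have hn : (n : ℝ) + 1 / 2 ≠ 0 := by positivity
    simp only [a, show (n + 1 : ℝ) - 1 / 2 = n + 1 / 2 by ring]
    field_simp
  simp_rw [hintegrand, one_div]
  have hprod := (hindep.precomp Nat.succ_injective).tendsto_prod_inv_one_add_of_hasLaw_expMeasure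
    hE (fun n => by positivity) ha
  exact tendsto_nhds_unique hprod (tendsto_euler_inv_cosh_sqrt_prod hs)

/-- for i.i.d. `Exp(1)` random variables `E_n`, the random variable
`C = (2/π²) Σ_{n≥1} E_n/(n − 1/2)²` has Laplace transform
`E[e^{−sC}] = 1/cosh(√(2s))` for all `s ≥ 0`. -/
theorem stmt_18 {Ω : Type*} [MeasureSpace Ω] {P : Measure Ω} [IsProbabilityMeasure P]
    (E : ℕ → Ω → ℝ) (hmeas : ∀ n, Measurable (E n))
    (hindep : iIndepFun E P)
    (hlaw : ∀ n, Measure.map (E n) P = expMeasure 1)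
    (s : ℝ) (hs : 0 ≤ s) :
    ∫ ω, Real.exp (-s * ((2 / Real.pi ^ 2) *
        ∑' n : ℕ, E (n + 1) ω / ((n + 1 : ℝ) - 1/2) ^ 2)) ∂P
      = 1 / Real.cosh (Real.sqrt (2 * s)) :=
  stmt_18_general E hindep hlaw s hs
end
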